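/- (Weighted Carleson Lemma.) Let v be a weight on ℝ, let {λ_I}_{I∈D} be a sequence of nonnegative reals indexed by the standard dyadic grid D, and let A > 0. Then ∑_{I∈D(J)} λ_I ≤ A·v(J) holds for every J ∈ D if and only if for every nonnegative measurable function F ∈ L¹(v), ∑_{I∈D} λ_I · inf_{x∈I} F(x) ≤ A · ∫_ℝ F(x) v(x) dx. -/

import Mathlib

open MeasureTheory ENNReal

noncomputable section

/-- Average of `f` over a set `I ⊆ ℝ` with respect to Lebesgue measure. -/
def iAvg (I : Set ℝ) (f : ℝ → ℝ) : ℝ :=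
  (volume I).toReal⁻¹ * ∫ x in I, f x

/-- A weight on `ℝ`: locally integrable and a.e. positive. -/
def IsWeight1 (w : ℝ → ℝ) : Prop :=
  MeasureTheory.LocallyIntegrable w volume ∧ ∀ᵐ x : ℝ, 0 < w x

/-- The standard dyadic interval `[k 2^{-j}, (k+1) 2^{-j})`. -/
def dyadInt (j k : ℤ) : Set ℝ :=
  Set.Ico ((k : ℝ) * (2:ℝ) ^ (-j)) (((k : ℝ) + 1) * (2:ℝ) ^ (-j))

/-!
Dyadic intervals form a laminar family: two of them are either nested or disjoint. For such a
family the Carleson condition on the intervals themselves extends to arbitrary sets,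
`∑_{I ⊆ U} λ_I ≤ A v(U)`, by splitting a finite subfamily along a member maximal for inclusion.
Since `I ⊆ {F > t}` whenever `inf_I F > t`, applying this to the level sets of `F` and integrating
in `t` (layer cake) gives the testing inequality. Conversely, testing with `F = 1_J` gives back
the Carleson condition, as `inf_I 1_J` is `1` if `I ⊆ J` and `0` otherwise.
-/

def IsLaminar {ι α : Type*} (D : ι → Set α) : Prop :=
  ∀ i j, (D i ∩ D j).Nonempty → D i ⊆ D j ∨ D j ⊆ D i

def IsCarleson {ι α : Type*} [MeasurableSpace α] (μ : Measure α) (D : ι → Set α)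
    (c : ι → ℝ≥0∞) (C : ℝ≥0∞) : Prop :=
  ∀ i, ∑' j : {j // D j ⊆ D i}, c j ≤ C * μ (D i)

theorem setLIntegral_Ioi_zero_indicator_Iio_const (s : ℝ) (a : ℝ≥0∞) :
    ∫⁻ t in Set.Ioi 0, (Set.Iio s).indicator (fun _ => a) t = a * ENNReal.ofReal s := by
  rw [lintegral_indicator measurableSet_Iio, Measure.restrict_restrict measurableSet_Iio,
    Set.Iio_inter_Ioi, setLIntegral_const, Real.volume_Ioo, sub_zero]

namespace IsLaminar

variable {ι α : Type*} [MeasurableSpace α] {μ : Measure α} {D : ι → Set α} {c : ι → ℝ≥0∞}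
  {C : ℝ≥0∞}

theorem sum_le_mul_measure_biUnion (hD : IsLaminar D) (hmeas : ∀ i, MeasurableSet (D i))
    (hC : IsCarleson μ D c C) (T : Finset ι) :
    ∑ i ∈ T, c i ≤ C * μ (⋃ i ∈ T, D i) := by
  classical
  induction T using Finset.strongInduction with
  | _ T ih =>
  rcases T.eq_empty_or_nonempty with rfl | hT
  · simp
  obtain ⟨m, hmT, hmax⟩ := T.exists_maximalFor D hT
  set Tin := T.filter fun i => D i ⊆ D m
  set Tout := T.filter fun i => ¬D i ⊆ D m
  have hin : ∑ i ∈ Tin, c i ≤ C * μ (D m) :=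
    calc ∑ i ∈ Tin, c i = ∑ i ∈ Tin.subtype (fun i => D i ⊆ D m), c i := by
          rw [Finset.sum_subtype_of_mem _ fun i hi => (Finset.mem_filter.1 hi).2]
      _ ≤ _ := ENNReal.sum_le_tsum _
      _ ≤ _ := hC m
  have hout : ∑ i ∈ Tout, c i ≤ C * μ (⋃ i ∈ Tout, D i) :=
    ih Tout (Finset.filter_ssubset.2 ⟨m, hmT, not_not.2 subset_rfl⟩)
  have hdisj : Disjoint (D m) (⋃ i ∈ Tout, D i) := by
    simp only [Set.disjoint_iUnion_right, Tout, Finset.mem_filter]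
    rintro i ⟨hiT, hiout⟩
    refine Set.disjoint_iff_inter_eq_empty.2 (Set.not_nonempty_iff_eq_empty.1 fun hne => ?_)
    rcases hD m i hne with hmi | him
    · exact hiout (hmax hiT hmi)
    · exact hiout him
  calc ∑ i ∈ T, c i = ∑ i ∈ Tin, c i + ∑ i ∈ Tout, c i :=
        (Finset.sum_filter_add_sum_filter_not T _ _).symm
    _ ≤ C * μ (D m) + C * μ (⋃ i ∈ Tout, D i) := add_le_add hin hout
    _ = C * μ (D m ∪ ⋃ i ∈ Tout, D i) := by
        rw [measure_union hdisj (Tout.measurableSet_biUnion fun i _ => hmeas i), mul_add]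
    _ ≤ C * μ (⋃ i ∈ T, D i) := by
        gcongr
        exact Set.union_subset (Set.subset_biUnion_of_mem hmT)
          (Set.biUnion_subset_biUnion_left (Finset.filter_subset _ T))

theorem tsum_le_mul_measure (hD : IsLaminar D) (hmeas : ∀ i, MeasurableSet (D i))
    (hC : IsCarleson μ D c C) (U : Set α) :
    ∑' i : {i | D i ⊆ U}, c i ≤ C * μ U := by
  refine ENNReal.summable.tsum_le_of_sum_le fun T => ?_
  calc ∑ i ∈ T, c i = ∑ i ∈ T.map (Function.Embedding.subtype _), c i := by
        rw [Finset.sum_map]; rfl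
    _ ≤ C * μ (⋃ i ∈ T.map (Function.Embedding.subtype _), D i) :=
        hD.sum_le_mul_measure_biUnion hmeas hC _
    _ ≤ C * μ U := by
        gcongr
        refine Set.iUnion₂_subset fun i hi => ?_
        obtain ⟨j, -, rfl⟩ := Finset.mem_map.1 hi
        exact j.2

theorem tsum_mul_ofReal_le_mul_lintegral [Countable ι] (hD : IsLaminar D)
    (hmeas : ∀ i, MeasurableSet (D i)) (hC : IsCarleson μ D c C) {f : α → ℝ}
    (hf0 : 0 ≤ᵐ[μ] f) (hfm : AEMeasurable f μ) {s : ι → ℝ} (hs : ∀ i, ∀ x ∈ D i, s i ≤ f x) :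
    ∑' i, c i * ENNReal.ofReal (s i) ≤ C * ∫⁻ x, ENNReal.ofReal (f x) ∂μ := by
  have hlevel (t : ℝ) :
      ∑' i, (Set.Iio (s i)).indicator (fun _ => c i) t ≤ C * μ {x | t < f x} :=
    calc ∑' i, (Set.Iio (s i)).indicator (fun _ => c i) t = ∑' i : {i | t < s i}, c i := by
          rw [tsum_subtype]
          rfl
      _ ≤ ∑' i : {i | D i ⊆ {x | t < f x}}, c i :=
          ENNReal.tsum_mono_subtype c fun i hi x hx => lt_of_lt_of_le hi (hs i x hx)
      _ ≤ C * μ {x | t < f x} := hD.tsum_le_mul_measure hmeas hC _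
  have hmeas_lt : Measurable fun t => μ {x | t < f x} :=
    Antitone.measurable fun a b hab => measure_mono fun x hx => lt_of_le_of_lt hab hx
  calc ∑' i, c i * ENNReal.ofReal (s i)
      = ∑' i, ∫⁻ t in Set.Ioi 0, (Set.Iio (s i)).indicator (fun _ => c i) t := by
        simp only [setLIntegral_Ioi_zero_indicator_Iio_const]
    _ = ∫⁻ t in Set.Ioi 0, ∑' i, (Set.Iio (s i)).indicator (fun _ => c i) t :=
        (lintegral_tsum fun i => (measurable_const.indicator measurableSet_Iio).aemeasurable).symm
    _ ≤ ∫⁻ t in Set.Ioi 0, C * μ {x | t < f x} := lintegral_mono hlevel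
    _ = C * ∫⁻ x, ENNReal.ofReal (f x) ∂μ := by
        rw [lintegral_const_mul C hmeas_lt, lintegral_eq_lintegral_meas_lt μ hf0 hfm]

theorem tsum_ofReal_mul_sInf_le [Countable ι] (hD : IsLaminar D)
    (hmeas : ∀ i, MeasurableSet (D i)) {lam : ι → ℝ}
    (hC : IsCarleson μ D (fun i => ENNReal.ofReal (lam i)) C) {F : α → ℝ}
    (hF0 : ∀ x, 0 ≤ F x) (hFm : AEMeasurable F μ) :
    ∑' i, ENNReal.ofReal (lam i * sInf (F '' D i)) ≤ C * ∫⁻ x, ENNReal.ofReal (F x) ∂μ := by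
  have hinf_nonneg (i : ι) : 0 ≤ sInf (F '' D i) :=
    Real.sInf_nonneg (Set.forall_mem_image.2 fun x _ => hF0 x)
  have hinf_le (i : ι) : ∀ x ∈ D i, sInf (F '' D i) ≤ F x := fun x hx =>
    csInf_le ⟨0, Set.forall_mem_image.2 fun y _ => hF0 y⟩ (Set.mem_image_of_mem F hx)
  simp_rw [ENNReal.ofReal_mul' (hinf_nonneg _)]
  exact hD.tsum_mul_ofReal_le_mul_lintegral hmeas hC (ae_of_all _ hF0) hFm hinf_le

end IsLaminar

theorem tsum_ofReal_mul_sInf_image_indicator_one {ι β : Type*} {D : ι → Set β}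
    (hD : ∀ i, (D i).Nonempty) (lam : ι → ℝ) (J : Set β) :
    ∑' i, ENNReal.ofReal (lam i * sInf (J.indicator 1 '' D i))
      = ∑' i : {i // D i ⊆ J}, ENNReal.ofReal (lam i) := by
  refine Eq.symm <| (tsum_subtype {i | D i ⊆ J} fun i => ENNReal.ofReal (lam i)).trans
    (tsum_congr fun i => ?_)
  by_cases hi : D i ⊆ J
  · have himage : J.indicator (1 : β → ℝ) '' D i = {1} := by
      rw [← (hD i).image_const (1 : ℝ)]
      exact Set.image_congr fun x hx => Set.indicator_of_mem (hi hx) _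
    rw [himage, csInf_singleton, mul_one, Set.indicator_of_mem (show i ∈ {i | D i ⊆ J} from hi)]
  · obtain ⟨x, hx, hxJ⟩ := Set.not_subset.1 hi
    have hleast : IsLeast (J.indicator (1 : β → ℝ) '' D i) 0 :=
      ⟨⟨x, hx, Set.indicator_of_notMem hxJ _⟩,
        Set.forall_mem_image.2 fun y _ => Set.indicator_nonneg (fun _ _ => zero_le_one) y⟩
    rw [hleast.csInf_eq, mul_zero, ENNReal.ofReal_zero,
      Set.indicator_of_notMem (show i ∉ {i | D i ⊆ J} from hi)]

theorem ofReal_integral_mul_eq_lintegral_withDensity {α : Type*} [MeasurableSpace α]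
    {μ : Measure α} {f g : α → ℝ} (hf0 : 0 ≤ᵐ[μ] f) (hg0 : 0 ≤ᵐ[μ] g) (hf : AEMeasurable f μ)
    (hg : AEMeasurable g μ) (hfg : Integrable (fun x => f x * g x) μ) :
    ENNReal.ofReal (∫ x, f x * g x ∂μ)
      = ∫⁻ x, ENNReal.ofReal (f x) ∂μ.withDensity fun x => ENNReal.ofReal (g x) := by
  rw [lintegral_withDensity_eq_lintegral_mul₀ hg.ennreal_ofReal hf.ennreal_ofReal,
    ofReal_integral_eq_lintegral_ofReal hfg
      (by filter_upwards [hf0, hg0] with x hf hg using mul_nonneg hf hg)]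
  refine lintegral_congr_ae ?_
  filter_upwards [hf0] with x hx
  rw [Pi.mul_apply, ENNReal.ofReal_mul hx, mul_comm]

theorem mem_dyadInt_iff {j k : ℤ} {x : ℝ} : x ∈ dyadInt j k ↔ ⌊x * 2 ^ j⌋ = k := by
  have h2 : (0 : ℝ) < 2 ^ j := zpow_pos two_pos j
  rw [dyadInt, Set.mem_Ico, Int.floor_eq_iff, zpow_neg, ← div_eq_mul_inv, ← div_eq_mul_inv,
    div_le_iff₀ h2, lt_div_iff₀ h2]

theorem floor_mul_two_zpow_eq (x : ℝ) (j : ℤ) (n : ℕ) :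
    ⌊x * 2 ^ j⌋ = ⌊x * 2 ^ (j + n)⌋ / 2 ^ n := by
  rw [← Int.floor_div_cast_of_nonneg (by positivity), zpow_add₀ two_ne_zero]
  push_cast
  rw [zpow_natCast, ← mul_assoc, mul_div_cancel_right₀ _ (by positivity)]

theorem measurableSet_dyadInt (j k : ℤ) : MeasurableSet (dyadInt j k) := measurableSet_Ico

theorem dyadInt_nonempty (j k : ℤ) : (dyadInt j k).Nonempty :=
  Set.nonempty_Ico.2 (mul_lt_mul_of_pos_right (lt_add_one _) (zpow_pos two_pos _))

theorem dyadInt_subset_of_le {j j' k k' : ℤ} (hj : j ≤ j')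
    (hne : (dyadInt j k ∩ dyadInt j' k').Nonempty) : dyadInt j' k' ⊆ dyadInt j k := by
  obtain ⟨n, rfl⟩ := Int.le.dest hj
  obtain ⟨x, hx, hx'⟩ := hne
  intro y hy
  rw [mem_dyadInt_iff] at hx hx' hy ⊢
  rw [floor_mul_two_zpow_eq y j n, hy, ← hx', ← floor_mul_two_zpow_eq, hx]

theorem isLaminar_dyadInt : IsLaminar fun p : ℤ × ℤ => dyadInt p.1 p.2 := by
  intro p q hpq
  rcases le_total p.1 q.1 with h | h
  · exact .inr (dyadInt_subset_of_le h hpq)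
  · exact .inl (dyadInt_subset_of_le h (Set.inter_comm _ _ ▸ hpq))

namespace IsWeight1

variable {v : ℝ → ℝ}

theorem ae_nonneg (hv : IsWeight1 v) : 0 ≤ᵐ[volume] v := hv.2.mono fun _ hx => hx.le

theorem integrableOn_dyadInt (hv : IsWeight1 v) (j k : ℤ) : IntegrableOn v (dyadInt j k) :=
  (hv.1.integrableOn_isCompact isCompact_Icc).mono_set Set.Ico_subset_Icc_self

theorem ofReal_mul_setIntegral_dyadInt (hv : IsWeight1 v) (A : ℝ) (j k : ℤ) :
    ENNReal.ofReal (A * ∫ x in dyadInt j k, v x)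
      = ENNReal.ofReal A * volume.withDensity (fun x => ENNReal.ofReal (v x)) (dyadInt j k) := by
  have hv0 : 0 ≤ᵐ[volume.restrict (dyadInt j k)] v := ae_restrict_of_ae hv.ae_nonneg
  rw [ENNReal.ofReal_mul' (setIntegral_nonneg_of_ae_restrict hv0),
    withDensity_apply _ (measurableSet_dyadInt j k),
    ofReal_integral_eq_lintegral_ofReal (hv.integrableOn_dyadInt j k) hv0]

end IsWeight1

theorem weighted_carleson_lemma_general (v : ℝ → ℝ) (hv : IsWeight1 v)
    (lam : ℤ × ℤ → ℝ) (A : ℝ) :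
    (∀ j k : ℤ,
      ∑' q : {p : ℤ × ℤ // dyadInt p.1 p.2 ⊆ dyadInt j k}, ENNReal.ofReal (lam q.1)
        ≤ ENNReal.ofReal (A * ∫ x in dyadInt j k, v x))
    ↔
    (∀ F : ℝ → ℝ, (∀ x, 0 ≤ F x) → Measurable F →
      MeasureTheory.Integrable (fun x => F x * v x) volume →
      ∑' p : ℤ × ℤ, ENNReal.ofReal (lam p * sInf (F '' dyadInt p.1 p.2))
        ≤ ENNReal.ofReal (A * ∫ x, F x * v x)) := by
  set μ := volume.withDensity fun x => ENNReal.ofReal (v x)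
  constructor
  · intro hC F hF0 hFm hFint
    have hFv0 : 0 ≤ᵐ[volume] fun x => F x * v x :=
      hv.ae_nonneg.mono fun x hx => mul_nonneg (hF0 x) hx
    calc ∑' p, ENNReal.ofReal (lam p * sInf (F '' dyadInt p.1 p.2))
        ≤ ENNReal.ofReal A * ∫⁻ x, ENNReal.ofReal (F x) ∂μ :=
          isLaminar_dyadInt.tsum_ofReal_mul_sInf_le (fun p => measurableSet_dyadInt _ _)
            (fun p => hv.ofReal_mul_setIntegral_dyadInt A p.1 p.2 ▸ hC p.1 p.2) hF0
            hFm.aemeasurable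
      _ = ENNReal.ofReal (A * ∫ x, F x * v x) := by
          rw [ENNReal.ofReal_mul' (integral_nonneg_of_ae hFv0),
            ofReal_integral_mul_eq_lintegral_withDensity (ae_of_all _ hF0) hv.ae_nonneg
              hFm.aemeasurable hv.1.aestronglyMeasurable.aemeasurable hFint]
  · intro hF j k
    have hJ := measurableSet_dyadInt j k
    have hindicator :
        (fun x => (dyadInt j k).indicator 1 x * v x) = (dyadInt j k).indicator v := by
      funext x; by_cases hx : x ∈ dyadInt j k <;> simp [hx]
    have htest := hF ((dyadInt j k).indicator 1) (Set.indicator_nonneg fun _ _ => zero_le_one)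
      (measurable_const.indicator hJ)
      (hindicator ▸ (hv.integrableOn_dyadInt j k).integrable_indicator hJ)
    rwa [hindicator, integral_indicator hJ, tsum_ofReal_mul_sInf_image_indicator_one
      (D := fun p : ℤ × ℤ => dyadInt p.1 p.2) fun p => dyadInt_nonempty p.1 p.2] at htest

/-- **Weighted Carleson Lemma.** A nonnegative sequence `{λ_I}_{I ∈ D}` is
`v`-Carleson with intensity `A` (i.e. `∑_{I ∈ D(J)} λ_I ≤ A v(J)` for all `J ∈ D`) if and
only if `∑_{I ∈ D} λ_I inf_{x ∈ I} F(x) ≤ A ∫ F v` for every nonnegative `F ∈ L¹(v)`.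
Dyadic intervals are parametrized by pairs `(j,k) ∈ ℤ × ℤ`. -/
theorem weighted_carleson_lemma (v : ℝ → ℝ) (hv : IsWeight1 v)
    (lam : ℤ × ℤ → ℝ) (hlam : ∀ p, 0 ≤ lam p) (A : ℝ) (hA : 0 < A) :
    (∀ j k : ℤ,
      ∑' q : {p : ℤ × ℤ // dyadInt p.1 p.2 ⊆ dyadInt j k}, ENNReal.ofReal (lam q.1)
        ≤ ENNReal.ofReal (A * ∫ x in dyadInt j k, v x))
    ↔
    (∀ F : ℝ → ℝ, (∀ x, 0 ≤ F x) → Measurable F →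
      MeasureTheory.Integrable (fun x => F x * v x) volume →
      ∑' p : ℤ × ℤ, ENNReal.ofReal (lam p * sInf (F '' dyadInt p.1 p.2))
        ≤ ENNReal.ofReal (A * ∫ x, F x * v x)) :=
  weighted_carleson_lemma_general v hv lam A

end
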